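/- Let π be an O(n+1,n)-projection (π² = π and C_n πᵗ C_n = π) and α ∈ ℝ \ {0}. Define g_{α,π}(λ) = I + (2α/(λ−α))(I−π). Then g_{α,π}(−λ)ᵗ C_n g_{α,π}(λ) = C_n for all λ ∉ {α, −α}, and g_{α,π}(λ)⁻¹ = g_{−α,π}(λ). -/
import Mathlib


open Matrix

/-- The signed anti-diagonal matrix `C_n`. -/
def Cmat (n : ℕ) : Matrix (Fin (2*n+1)) (Fin (2*n+1)) ℝ :=
  fun i j => if i.val + j.val = 2*n then (-1 : ℝ)^(n + i.val) else 0

/-- `g_{α,π}(λ) = I + (2α/(λ−α))(I−π)`. -/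
noncomputable def gmat (n : ℕ) (a lam : ℝ) (P : Matrix (Fin (2*n+1)) (Fin (2*n+1)) ℝ) :
    Matrix (Fin (2*n+1)) (Fin (2*n+1)) ℝ :=
  1 + (2*a/(lam - a)) • ((1 : Matrix (Fin (2*n+1)) (Fin (2*n+1)) ℝ) - P)

lemma Csq (n : ℕ) : Cmat n * Cmat n = 1 := by
  ext i j
  have hi : i.val ≤ 2*n := by omega
  rw [Matrix.mul_apply]
  have hk0 : 2*n - i.val < 2*n+1 := by omega
  rw [Finset.sum_eq_single (⟨2*n - i.val, hk0⟩ : Fin (2*n+1))]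
  · simp only [Cmat, Matrix.one_apply]
    rw [if_pos (by omega : i.val + (2*n - i.val) = 2*n)]
    by_cases hij : i = j
    · subst hij
      rw [if_pos (by omega : (2*n - i.val) + i.val = 2*n), if_pos rfl, ← pow_add]
      rw [(by omega : n + i.val + (n + (2*n - i.val)) = 2*(2*n)), pow_mul]
      norm_num
    · rw [if_neg, if_neg hij, mul_zero]
      intro h
      exact hij (Fin.ext (by omega))
  · intro k _ hk
    simp only [Cmat]
    rw [if_neg, zero_mul]
    intro h
    exact hk (Fin.ext (by simp only; omega))
  · intro h
    exact absurd (Finset.mem_univ _) h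

theorem stmt11 (n : ℕ) (π : Matrix (Fin (2*n+1)) (Fin (2*n+1)) ℝ)
    (hproj : π * π = π) (hsharp : Cmat n * πᵀ * Cmat n = π)
    (α : ℝ) (hα : α ≠ 0) (lam : ℝ) (hl1 : lam ≠ α) (hl2 : lam ≠ -α) :
    (gmat n α (-lam) π)ᵀ * Cmat n * gmat n α lam π = Cmat n ∧
    gmat n α lam π * gmat n (-α) lam π = 1 ∧
    gmat n (-α) lam π * gmat n α lam π = 1 := by
  set C := Cmat n with hCdef
  have hC2 : C * C = 1 := Csq n
  have hcomm : πᵀ * C = C * π := by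
    calc πᵀ * C = (C * C) * (πᵀ * C) := by rw [hC2, one_mul]
    _ = C * (C * πᵀ * C) := by simp only [Matrix.mul_assoc]
    _ = C * π := by rw [hsharp]
  set Q : Matrix (Fin (2*n+1)) (Fin (2*n+1)) ℝ := 1 - π with hQdef
  have hQ2 : Q * Q = Q := by
    simp [hQdef, Matrix.mul_sub, Matrix.sub_mul, hproj]
  have hQC : Qᵀ * C = C * Q := by
    simp [hQdef, Matrix.sub_mul, Matrix.mul_sub, hcomm]
  set c : ℝ := 2*α/(lam - α) with hc
  set d : ℝ := -(2*α)/(lam + α) with hd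
  have hla : lam - α ≠ 0 := sub_ne_zero.mpr hl1
  have hlb : lam + α ≠ 0 := by
    intro h; exact hl2 (by linarith)
  have hkey : c + d + c * d = 0 := by
    rw [hc, hd]; field_simp; ring
  have hg1 : gmat n α lam π = 1 + c • Q := rfl
  have hg2 : gmat n (-α) lam π = 1 + d • Q := by
    rw [gmat, hQdef, hd]
    congr 2
    ring
  have hg3 : gmat n α (-lam) π = 1 + d • Q := by
    rw [gmat, hQdef, hd]
    congr 2
    rw [show -lam - α = -(lam + α) by ring, div_neg, neg_div]
  have hprod : ∀ (x y : ℝ), x + y + x * y = 0 →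
      (1 + x • Q) * (1 + y • Q) = 1 := by
    intro x y hxy
    have : (1 + x • Q) * (1 + y • Q) = 1 + (x + y + x * y) • Q := by
      simp only [Matrix.add_mul, Matrix.mul_add, Matrix.smul_mul, Matrix.mul_smul,
        hQ2, one_mul, mul_one, smul_smul]
      module
    rw [this, hxy, zero_smul, add_zero]
  refine ⟨?_, ?_, ?_⟩
  · rw [hg1, hg3]
    have ht : (1 + d • Q)ᵀ = 1 + d • Qᵀ := by
      rw [transpose_add, transpose_smul, transpose_one]
    rw [ht]
    have expand : (1 + d • Qᵀ) * C * (1 + c • Q)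
        = C + (c + d + d * c) • (C * Q) := by
      simp only [Matrix.add_mul, Matrix.mul_add, Matrix.smul_mul, Matrix.mul_smul,
        hQC, one_mul, mul_one, smul_smul, Matrix.mul_assoc, hQ2]
      module
    rw [expand, (by linarith [hkey] : c + d + d * c = 0), zero_smul, add_zero]
  · rw [hg1, hg2]; exact hprod c d hkey
  · rw [hg2, hg1]; exact hprod d c (by linarith [hkey])
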